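/- Let G_t = (1-t)F + t·δ_y where F is a CDF with a density f that is positive and continuous at its τ-quantile q_τ, and δ_y is the point mass at y with y ≠ q_τ. Then the derivative at t = 0 of the τ-quantile of G_t equals (τ - 𝟙[y ≤ q_τ])/f(q_τ). -/

import Mathlib

open Filter Set

open scoped Topology

/-- Gateaux derivative of the `τ`-quantile functional in the direction of a
point mass: for `G_t = (1-t)F + t δ_y`, the derivative at `t = 0` (from the
right, since `t ∈ [0,1)`) of `τ`-quantile of `G_t` equals
`(τ - 𝟙[y ≤ q_τ]) / f(q_τ)`. -/
theorem quantile_influence_function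
    (F f : ℝ → ℝ) (τ qτ y : ℝ)
    (hτ : τ ∈ Set.Ioo (0 : ℝ) 1)
    (hF : Monotone F)
    (hderiv : ∀ᶠ x in nhds qτ, HasDerivAt F (f x) x)
    (hfc : ContinuousAt f qτ)
    (hfq : 0 < f qτ)
    (hFq : F qτ = τ)
    (hy : y ≠ qτ) :
    HasDerivWithinAt
      (fun t : ℝ =>
        sInf {x : ℝ | τ ≤ (1 - t) * F x + t * (if y ≤ x then (1 : ℝ) else 0)})
      ((τ - (if y ≤ qτ then (1 : ℝ) else 0)) / f qτ)
      (Set.Ici (0 : ℝ)) 0 := by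
  set c : ℝ := if y ≤ qτ then (1 : ℝ) else 0 with hc
  have hf' : f qτ ≠ 0 := ne_of_gt hfq
  have hs : HasStrictDerivAt F (f qτ) qτ :=
    hasStrictDerivAt_of_hasDerivAt_of_continuousAt hderiv hfc
  set g : ℝ → ℝ := hs.localInverse F (f qτ) qτ hf' with hgdef
  have hginv : HasStrictDerivAt g (f qτ)⁻¹ (F qτ) := hs.to_localInverse hf'
  have hleft : ∀ᶠ x in 𝓝 qτ, g (F x) = x :=
    (hs.hasStrictFDerivAt_equiv hf').eventually_left_inverse
  have hright : ∀ᶠ z in 𝓝 (F qτ), F (g z) = z :=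
    (hs.hasStrictFDerivAt_equiv hf').eventually_right_inverse
  have hg0 : g τ = qτ := by
    rw [← hFq]; exact hleft.self_of_nhds
  -- the curve u t = (τ - t c)/(1 - t)
  set u : ℝ → ℝ := fun t => (τ - t * c) / (1 - t) with hudef
  have hu0 : u 0 = τ := by simp [hudef]
  have hudiv : HasDerivAt u (τ - c) 0 := by
    have h1 : HasDerivAt (fun t : ℝ => τ - t * c) (0 - 1 * c) 0 :=
      (hasDerivAt_const 0 τ).sub ((hasDerivAt_id 0).mul_const c)
    have h2 : HasDerivAt (fun t : ℝ => 1 - t) (0 - 1) 0 :=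
      (hasDerivAt_const 0 (1:ℝ)).sub (hasDerivAt_id 0)
    have := h1.div h2 (by norm_num)
    refine this.congr_deriv ?_
    ring_nf
  have hφ : HasDerivAt (fun t => g (u t)) ((τ - c) / f qτ) 0 := by
    have hg' : HasDerivAt g (f qτ)⁻¹ (u 0) := by
      rw [hu0, ← hFq]; exact hginv.hasDerivAt
    have := hg'.comp 0 hudiv
    refine this.congr_deriv ?_
    field_simp
  have hφ0 : g (u 0) = qτ := by rw [hu0, hg0]
  -- choose a radius r
  obtain ⟨ε, hε0, hε⟩ := Metric.eventually_nhds_iff.1 hleft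
  set d : ℝ := |y - qτ| with hd
  have hd0 : 0 < d := abs_pos.2 (sub_ne_zero.2 hy)
  set r : ℝ := min ε d with hr
  have hr0 : 0 < r := lt_min hε0 hd0
  have hrε : r ≤ ε := min_le_left _ _
  have hrd : r ≤ d := min_le_right _ _
  -- indicator is constant on the ball of radius r
  have hind : ∀ x : ℝ, |x - qτ| < r → (if y ≤ x then (1 : ℝ) else 0) = c := by
    intro x hx
    rcases lt_or_gt_of_ne hy with h | h
    · have hyq : y ≤ qτ := le_of_lt h
      have : y ≤ x := by
        have h1 : qτ - x < r := by
          have := abs_lt.1 hx; linarith [this.1]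
        have hdv : d = qτ - y := by
          rw [hd, abs_of_neg (by linarith : y - qτ < 0)]; ring
        nlinarith
      simp [hc, this, hyq]
    · have hyq : ¬ y ≤ qτ := not_le.2 h
      have : ¬ y ≤ x := by
        have h1 : x - qτ < r := (abs_lt.1 hx).2
        have hdv : d = y - qτ := by
          rw [hd, abs_of_pos (by linarith : 0 < y - qτ)]
        push_neg
        nlinarith
      simp [hc, this, hyq]
  -- local strict monotonicity of F
  have hFlt : ∀ x x' : ℝ, |x - qτ| < r → |x' - qτ| < r → x < x' → F x < F x' := by
    intro x x' hx hx' hlt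
    refine lt_of_le_of_ne (hF hlt.le) (fun h => ?_)
    have e1 : g (F x) = x := hε (by simpa [Real.dist_eq] using lt_of_lt_of_le hx hrε)
    have e2 : g (F x') = x' := hε (by simpa [Real.dist_eq] using lt_of_lt_of_le hx' hrε)
    rw [h, e2] at e1
    exact absurd e1 (ne_of_gt hlt)
  -- the key identification lemma
  have key : ∀ t : ℝ, 0 ≤ t → t < 1/2 → |g (u t) - qτ| < r/2 → F (g (u t)) = u t →
      sInf {x : ℝ | τ ≤ (1 - t) * F x + t * (if y ≤ x then (1 : ℝ) else 0)} = g (u t) := by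
    intro t ht0 ht1 hnear hFg
    have h1t : (0:ℝ) < 1 - t := by linarith
    set φ := g (u t) with hφt
    have hφr : |φ - qτ| < r := lt_of_lt_of_le hnear (by linarith)
    have hGφ : (1 - t) * F φ + t * c = τ := by
      rw [hFg, hudef]
      field_simp
      ring
    have hmem : φ ∈ {x : ℝ | τ ≤ (1 - t) * F x + t * (if y ≤ x then (1 : ℝ) else 0)} := by
      show τ ≤ _
      rw [hind φ hφr, hGφ]
    have hlb : ∀ x ∈ {x : ℝ | τ ≤ (1 - t) * F x + t * (if y ≤ x then (1 : ℝ) else 0)}, φ ≤ x := by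
      intro x hx
      by_contra hcon
      push_neg at hcon
      have ha : qτ - r/2 < φ := by
        have := abs_lt.1 hnear; linarith [this.1]
      set x' : ℝ := max x (qτ - r/2) with hx'
      have hx'lt : x' < φ := max_lt hcon ha
      have hx'r : |x' - qτ| < r := by
        have h1 : qτ - r/2 ≤ x' := le_max_right _ _
        have h2 : x' - qτ < r := by
          have := (abs_lt.1 hφr).2
          linarith
        rw [abs_lt]; constructor <;> linarith
      have hFx' : F x' < F φ := hFlt x' φ hx'r hφr hx'lt
      have hmono : (1 - t) * F x + t * (if y ≤ x then (1 : ℝ) else 0)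
          ≤ (1 - t) * F x' + t * (if y ≤ x' then (1 : ℝ) else 0) := by
        have hxx' : x ≤ x' := le_max_left _ _
        have hFxx : F x ≤ F x' := hF hxx'
        have hindle : (if y ≤ x then (1 : ℝ) else 0) ≤ (if y ≤ x' then (1 : ℝ) else 0) := by
          by_cases hyx : y ≤ x
          · simp [hyx, le_trans hyx hxx']
          · by_cases hyx' : y ≤ x' <;> simp [hyx, hyx']
        have := mul_le_mul_of_nonneg_left hFxx (le_of_lt h1t)
        have := mul_le_mul_of_nonneg_left hindle ht0
        linarith
      have hlt : (1 - t) * F x' + t * (if y ≤ x' then (1 : ℝ) else 0) < τ := by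
        rw [hind x' hx'r, ← hGφ]
        have := mul_lt_mul_of_pos_left hFx' h1t
        linarith
      have : τ < τ := lt_of_le_of_lt (le_trans hx hmono) hlt
      exact lt_irrefl _ this
    exact le_antisymm (csInf_le ⟨φ, hlb⟩ hmem) (le_csInf ⟨φ, hmem⟩ hlb)
  -- eventual equality on [0, ∞) near 0
  have hucont : ContinuousAt u 0 := hudiv.continuousAt
  have hφcont : ContinuousAt (fun t => g (u t)) 0 := hφ.continuousAt
  have hev1 : ∀ᶠ t : ℝ in 𝓝 (0:ℝ), t < 1/2 := by
    filter_upwards [Iio_mem_nhds (show (0:ℝ) < 1/2 by norm_num)] with t ht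
    exact ht
  have hev2 : ∀ᶠ t : ℝ in 𝓝 (0:ℝ), |g (u t) - qτ| < r/2 := by
    have hb : ∀ᶠ z : ℝ in 𝓝 (g (u 0)), |z - qτ| < r/2 := by
      rw [hφ0]
      filter_upwards [Metric.ball_mem_nhds qτ (show 0 < r/2 by linarith)] with z hz
      simpa [Real.dist_eq] using hz
    exact hφcont.eventually hb
  have hev3 : ∀ᶠ t : ℝ in 𝓝 (0:ℝ), F (g (u t)) = u t := by
    have h : ∀ᶠ z in 𝓝 (u 0), F (g z) = z := by rwa [hu0, ← hFq]
    exact hucont.eventually h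
  have hevQ : (fun t : ℝ =>
        sInf {x : ℝ | τ ≤ (1 - t) * F x + t * (if y ≤ x then (1 : ℝ) else 0)})
      =ᶠ[𝓝[Set.Ici (0:ℝ)] 0] (fun t => g (u t)) := by
    have hmem : ∀ᶠ t : ℝ in 𝓝[Set.Ici (0:ℝ)] 0, 0 ≤ t :=
      eventually_mem_nhdsWithin
    filter_upwards [hmem, (hev1.and (hev2.and hev3)).filter_mono nhdsWithin_le_nhds]
      with t ht0 ⟨h1, h2, h3⟩
    exact key t ht0 h1 h2 h3
  have heq0 : sInf {x : ℝ | τ ≤ (1 - (0:ℝ)) * F x + 0 * (if y ≤ x then (1 : ℝ) else 0)}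
      = g (u 0) := by
    refine key 0 le_rfl (by norm_num) ?_ ?_
    · rw [hφ0]; simpa using (by linarith : 0 < r/2)
    · rw [hφ0, hu0, hFq]
  refine (hφ.hasDerivWithinAt.congr_of_eventuallyEq hevQ ?_)
  simpa using heq0
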